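/- arXiv:1108.2613 — 3 statements merged into one kernel-verified Lean document; each statement's English description precedes it below -/
import Mathlib

section
/- For all natural numbers r ≠ s, there exists l ≥ 2 with l = O(log(r+s)) such that r mod l ≠ s mod l. Precisely: there is a constant C such that for all r ≠ s with r + s ≥ 2, there exists l with 2 ≤ l ≤ C · log(r+s) and r mod l ≠ s mod l. -/
/-!
If every `l ≤ 2n` divided `d = |r - s| > 0`, then so would `lcm(1, …, 2n)`. Every prime power
dividing the central binomial coefficient `C(2n, n)` is at most `2n`, so `C(2n, n) ∣ lcm(1, …, 2n)`,
whence `2 ^ n ≤ C(2n, n) ≤ d ≤ r + s`. Taking `n = ⌊log₂ (r + s)⌋ + 1` makes this impossible, so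
some `l ≤ 2n = O(log (r + s))` does not divide `r - s`, i.e. distinguishes `r` and `s`.
-/

open Finset

namespace Nat

lemma two_pow_le_centralBinom (n : ℕ) : 2 ^ n ≤ centralBinom n := by
  induction n with
  | zero => simp
  | succ n ih =>
    have hstep : 2 * centralBinom n ≤ centralBinom (n + 1) := by
      refine Nat.le_of_mul_le_mul_left ?_ n.succ_pos
      rw [succ_mul_centralBinom_succ]
      nlinarith
    rw [pow_succ']
    omega

lemma lcm_Icc_one_ne_zero (m : ℕ) : (Icc 1 m).lcm id ≠ 0 := by
  simp [Finset.lcm_eq_zero_iff]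

lemma centralBinom_dvd_lcm_Icc (n : ℕ) : centralBinom n ∣ (Icc 1 (2 * n)).lcm id := by
  rcases n.eq_zero_or_pos with rfl | hn
  · simp
  rw [← factorization_prime_le_iff_dvd (centralBinom_ne_zero n) (lcm_Icc_one_ne_zero _)]
  intro p hp
  rw [← hp.pow_dvd_iff_le_factorization (lcm_Icc_one_ne_zero _)]
  refine Finset.dvd_lcm (mem_Icc.mpr ⟨one_le_pow _ _ hp.pos, ?_⟩)
  simpa [centralBinom] using pow_factorization_choose_le (p := p) (k := n) (by omega)

lemma two_pow_le_of_forall_dvd {n d : ℕ} (hd : d ≠ 0) (h : ∀ l ∈ Icc 1 (2 * n), l ∣ d) :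
    2 ^ n ≤ d :=
  calc 2 ^ n ≤ centralBinom n := two_pow_le_centralBinom n
    _ ≤ (Icc 1 (2 * n)).lcm id :=
      le_of_dvd (pos_of_ne_zero (lcm_Icc_one_ne_zero _)) (centralBinom_dvd_lcm_Icc n)
    _ ≤ d := le_of_dvd (pos_of_ne_zero hd) (Finset.lcm_dvd h)

lemma exists_two_le_le_log_not_dvd {d : ℕ} (hd : d ≠ 0) :
    ∃ l, 2 ≤ l ∧ l ≤ 2 * (log 2 d + 1) ∧ ¬ l ∣ d := by
  by_contra! hall
  have hdvd : ∀ l ∈ Icc 1 (2 * (log 2 d + 1)), l ∣ d := by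
    intro l hl
    obtain ⟨hl1, hl2⟩ := mem_Icc.mp hl
    rcases hl1.eq_or_lt with rfl | hlt
    · exact one_dvd d
    · exact hall l hlt hl2
  exact (two_pow_le_of_forall_dvd hd hdvd).not_gt (lt_pow_succ_log_self one_lt_two d)

lemma exists_two_le_le_log_mod_ne {r s : ℕ} (hrs : r < s) :
    ∃ l, 2 ≤ l ∧ l ≤ 2 * (log 2 (r + s) + 1) ∧ r % l ≠ s % l := by
  obtain ⟨l, hl2, hle, hndvd⟩ := exists_two_le_le_log_not_dvd (d := s - r) (by omega)
  refine ⟨l, hl2, hle.trans ?_, fun hmod => hndvd ((modEq_iff_dvd' hrs.le).mp hmod)⟩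
  gcongr
  omega

lemma two_mul_log_two_add_one_le_mul_log {m : ℕ} (hm : 2 ≤ m) :
    ((2 * (log 2 m + 1) : ℕ) : ℝ) ≤ 4 / Real.log 2 * Real.log m := by
  have hlog2 : 0 < Real.log 2 := Real.log_pos one_lt_two
  have hlog : (log 2 m : ℝ) ≤ Real.log m / Real.log 2 := by
    simpa [Real.logb] using Real.natLog_le_logb m 2
  have hone : 1 ≤ Real.log m / Real.log 2 := by
    rw [one_le_div hlog2]
    exact Real.log_le_log two_pos (by exact_mod_cast hm)
  push_cast
  rw [div_mul_eq_mul_div, mul_div_assoc]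
  linarith

end Nat

/-- For r ≠ s with r + s ≥ 2, some modulus l with 2 ≤ l ≤ C·log(r+s)
    distinguishes r and s. -/
theorem exists_small_distinguishing_modulus :
    ∃ C : ℝ, ∀ r s : ℕ, r ≠ s → 2 ≤ r + s →
      ∃ l : ℕ, 2 ≤ l ∧ (l : ℝ) ≤ C * Real.log (r + s) ∧ r % l ≠ s % l := by
  refine ⟨4 / Real.log 2, fun r s hne h2 => ?_⟩
  wlog hrs : r < s generalizing r s
  · obtain ⟨l, hl2, hle, hmod⟩ := this s r hne.symm (by omega) (by omega)
    exact ⟨l, hl2, by rwa [add_comm (s : ℝ)] at hle, hmod.symm⟩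
  obtain ⟨l, hl2, hle, hmod⟩ := Nat.exists_two_le_le_log_mod_ne hrs
  refine ⟨l, hl2, (Nat.cast_le.mpr hle).trans ?_, hmod⟩
  simpa only [Nat.cast_add] using Nat.two_mul_log_two_add_one_le_mul_log h2
end

section
/- For every m ≥ 1, the least common multiple of {1, 2, ..., m} satisfies lcm(1,...,m) ≥ 2^{m-1} for m ≥ 7 (equivalently, the shortest word a^m b^M in L_gcm has M exponentially large in m). -/
/-!
Nair's argument. For `1 ≤ k ≤ n` the number `k * (n choose k)` divides `lcm(1, …, n)`: at a
prime `p`, Kummer's theorem counts the exponent of `p` in `n choose k` as the carries of `k + (n - k)`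
in base `p`, and no carry can occur in the `p`-adic places where `k` ends in zeros, so the two
exponents together use at most the `log_p n` available places. Applied to `n * (2n choose n)` and
`(n + 1) * (2n + 1 choose n + 1) = (2n + 1) * (2n choose n)`, with `n` and `2n + 1` coprime, this
makes `n (2n + 1) (2n choose n) ≥ (2n + 1) 4ⁿ / 2` a divisor of `lcm(1, …, 2n + 1)`.
-/

open Finset

namespace Nat

theorem factorization_choose_add_factorization_le_log {p n k : ℕ} (hp : p.Prime) (hk : k ≠ 0)
    (hkn : k ≤ n) : (choose n k).factorization p + k.factorization p ≤ log p n := by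
  have hk_lt : k < p ^ (log p n + 1) := hkn.trans_lt (lt_pow_succ_log_self hp.one_lt n)
  have hdisj : Disjoint {i ∈ Ico 1 (log p n + 1) | p ^ i ≤ k % p ^ i + (n - k) % p ^ i}
      {i ∈ Ico 1 (log p n + 1) | p ^ i ∣ k} := by
    simp +contextual [disjoint_right, dvd_iff_mod_eq_zero, Nat.mod_lt _ (pow_pos hp.pos _)]
  rw [factorization_choose hp hkn (lt_succ_self _),
    factorization_eq_card_pow_dvd_of_lt hp (pos_of_ne_zero hk) hk_lt,
    ← card_union_of_disjoint hdisj, ← filter_or]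
  simpa using card_filter_le (Ico 1 (log p n + 1)) _

theorem mul_choose_dvd_lcmUpto {n k : ℕ} (hk : k ≠ 0) (hkn : k ≤ n) :
    k * choose n k ∣ lcmUpto n := by
  rw [← factorization_prime_le_iff_dvd (mul_ne_zero hk (choose_ne_zero hkn)) (lcmUpto_ne_zero n)]
  intro p hp
  rw [factorization_mul hk (choose_ne_zero hkn), Finsupp.add_apply, add_comm,
    factorization_lcmUpto n hp]
  exact factorization_choose_add_factorization_le_log hp hk hkn

theorem lcmUpto_dvd_lcmUpto {m n : ℕ} (h : m ≤ n) : lcmUpto m ∣ lcmUpto n :=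
  lcm_mono (Icc_subset_Icc_right h)

theorem mul_two_mul_add_one_mul_centralBinom_dvd_lcmUpto {n : ℕ} (hn : n ≠ 0) :
    n * (2 * n + 1) * centralBinom n ∣ lcmUpto (2 * n + 1) := by
  have h_left : n * centralBinom n ∣ lcmUpto (2 * n + 1) :=
    (mul_choose_dvd_lcmUpto hn (by lia)).trans (lcmUpto_dvd_lcmUpto (by lia))
  have h_right : (2 * n + 1) * centralBinom n ∣ lcmUpto (2 * n + 1) := by
    have h := mul_choose_dvd_lcmUpto (n := 2 * n + 1) (k := n + 1) (by lia) (by lia)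
    rwa [mul_comm, ← add_one_mul_choose_eq] at h
  have hcop : Coprime n (2 * n + 1) := by
    simp [show 2 * n + 1 = 1 + n + n by ring]
  simpa [lcm_mul_right, hcop.lcm_eq_mul] using Nat.lcm_dvd h_left h_right

theorem two_pow_le_lcmUpto_two_mul_add_one {n : ℕ} (hn : 2 ≤ n) :
    2 ^ (2 * n + 1) ≤ lcmUpto (2 * n + 1) :=
  calc 2 ^ (2 * n + 1) = 2 * 4 ^ n := by rw [pow_succ, pow_mul]; ring
    _ ≤ 2 * (2 * n * centralBinom n) :=
      Nat.mul_le_mul_left 2 (four_pow_le_two_mul_self_mul_centralBinom n (by lia))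
    _ ≤ n * (2 * n + 1) * centralBinom n := by
      rw [← mul_assoc]; exact Nat.mul_le_mul_right _ (by nlinarith)
    _ ≤ lcmUpto (2 * n + 1) :=
      le_of_dvd (lcmUpto_pos _) (mul_two_mul_add_one_mul_centralBinom_dvd_lcmUpto (by lia))

end Nat

/-- For m ≥ 7, lcm(1, 2, ..., m) ≥ 2^{m-1}. -/
theorem lcm_range_ge_two_pow (m : ℕ) (hm : 7 ≤ m) :
    2 ^ (m - 1) ≤ (Finset.Icc 1 m).lcm id := by
  set n := (m - 1) / 2
  calc 2 ^ (m - 1) ≤ 2 ^ (2 * n + 1) := Nat.pow_le_pow_right two_pos (by lia)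
    _ ≤ Nat.lcmUpto (2 * n + 1) := Nat.two_pow_le_lcmUpto_two_mul_add_one (by lia)
    _ ≤ Nat.lcmUpto m := Nat.le_of_dvd (Nat.lcmUpto_pos m) (Nat.lcmUpto_dvd_lcmUpto (by lia))
end

section
/- A unary language (subset of ℕ, identifying a^n with n) is regular if and only if it is eventually periodic. -/
/-!
By the Myhill–Nerode theorem a language is regular iff it has finitely many left quotients.
The left quotient of `{w | w.length ∈ S}` by a word of length `n` is the language of the
translate `{m | n + m ∈ S}`, so regularity means that `S` has finitely many translates.
Two equal translates `i < j` give the period `j - i` from `i` on; conversely, if `S` is periodic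
from `N` on with period `p`, every translate is one of the first `N + p`.
-/

def EventuallyPeriodic (S : Set ℕ) : Prop :=
  ∃ N p, 0 < p ∧ ∀ n, N ≤ n → (n ∈ S ↔ n + p ∈ S)

open Set

lemma List.length_surjective {α : Type*} [Nonempty α] :
    Function.Surjective (List.length : List α → ℕ) :=
  fun n => ⟨List.replicate n (Classical.arbitrary α), List.length_replicate⟩

lemma finite_range_of_eventually_add_eq {β : Type*} {f : ℕ → β} {N p : ℕ} (hp : 0 < p)
    (hf : ∀ n, N ≤ n → f (n + p) = f n) : (range f).Finite := by
  refine ((finite_Iio (N + p)).image f).subset ?_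
  rintro _ ⟨n, rfl⟩
  induction n using Nat.strong_induction_on with
  | _ n ih =>
    by_cases hn : n < N + p
    · exact ⟨n, hn, rfl⟩
    · obtain ⟨m, rfl⟩ : ∃ m, n = m + p := ⟨n - p, by omega⟩
      rw [hf m (by omega)]
      exact ih m (by omega)

lemma EventuallyPeriodic.of_preimage_add_eq {S : Set ℕ} {i j : ℕ} (hij : i < j)
    (h : (i + ·) ⁻¹' S = (j + ·) ⁻¹' S) : EventuallyPeriodic S := by
  refine ⟨i, j - i, by omega, fun n hn => ?_⟩
  obtain ⟨m, rfl⟩ := Nat.exists_eq_add_of_le hn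
  rw [show i + m + (j - i) = j + m by omega]
  exact Set.ext_iff.mp h m

lemma eventuallyPeriodic_iff_finite_range_preimage_add (S : Set ℕ) :
    EventuallyPeriodic S ↔ (range fun n => (n + ·) ⁻¹' S).Finite := by
  constructor
  · rintro ⟨N, p, hp, hper⟩
    refine finite_range_of_eventually_add_eq (N := N) hp fun n hn => ?_
    ext m
    simp only [mem_preimage, add_right_comm n p m]
    exact (hper (n + m) (by omega)).symm
  · intro hfin
    obtain ⟨i, j, hij, h⟩ := hfin.exists_lt_map_eq_of_forall_mem fun n => mem_range_self n
    exact .of_preimage_add_eq hij h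

lemma Language.finite_range_leftQuotient_setOf_length_mem_iff {α : Type*} [Nonempty α]
    (S : Set ℕ) :
    (range (leftQuotient {w : List α | w.length ∈ S})).Finite ↔
      (range fun n => (n + ·) ⁻¹' S).Finite := by
  have hrange : range (leftQuotient {w : List α | w.length ∈ S}) =
      (List.length ⁻¹' ·) '' range fun n => (n + ·) ⁻¹' S := by
    rw [← range_comp, ← (List.length_surjective (α := α)).range_comp]
    congr 1
    ext w v
    show (w ++ v).length ∈ S ↔ w.length + v.length ∈ S
    rw [List.length_append]
  rw [hrange]
  exact finite_image_iff (preimage_injective.mpr List.length_surjective).injOn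

/-- A unary language (identifying a^n with n) is regular iff it is eventually periodic. -/
theorem unary_regular_iff_eventuallyPeriodic (S : Set ℕ) :
    Language.IsRegular {w : List Unit | w.length ∈ S} ↔ EventuallyPeriodic S := by
  rw [eventuallyPeriodic_iff_finite_range_preimage_add,
    ← Language.finite_range_leftQuotient_setOf_length_mem_iff (α := Unit)]
  exact Language.isRegular_iff_finite_range_leftQuotient
end
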